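/- (Failure of naive base-as-context equivalence) There is no relation ⊩ satisfying both (i) the base-extension soundness/completeness property 'Γ ⊩ φ iff Γ ⊢ φ in IPL' (where Γ ⊩ φ means Γ ⊩_B φ for all bases B) and (ii) the equivalence '⊩_B φ iff ⌊B⌋ ⊢ φ in the operational semantics' for all bases B and formulae φ. Concretely: if ⊩_B (a → b ∨ c) iff B ⊢ a → b∨c operationally for all B, then every base supporting a → b ∨ c supports (a→b) ∨ (a→c), contradicting the underivability of (a → b∨c) → ((a→b) ∨ (a→c)) in IPL together with completeness. -/
import Mathlib


/-! ## hereditary Harrop fragment -/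

inductive Atm : Type
  | bot : Atm
  | at_ : ℕ → Atm

mutual
  inductive Df : Type
    | atom : Atm → Df
    | imp : Gf → Atm → Df
    | and : Df → Df → Df
  inductive Gf : Type
    | atom : Atm → Gf
    | dimp : Df → Gf → Gf
    | and : Gf → Gf → Gf
    | or : Gf → Gf → Gf
end

noncomputable instance : DecidableEq Df := Classical.decEq _
noncomputable instance : DecidableEq Atm := Classical.decEq _

/-- A program is a finite set of definite formulae. -/
abbrev Program := Finset Df

/-- `[P]` : closure of a program under decomposing conjunctions. -/
inductive InClos (P : Program) : Df → Prop
  | mem {d} : d ∈ P → InClos P d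
  | andl {d₁ d₂} : InClos P (Df.and d₁ d₂) → InClos P d₁
  | andr {d₁ d₂} : InClos P (Df.and d₁ d₂) → InClos P d₂

/-- An interpretation: a monotone map from programs to sets of atoms. -/
structure Interp where
  val : Program → Set Atm
  mono : ∀ {P Q : Program}, P ⊆ Q → val P ⊆ val Q

/-- Pointwise order on interpretations. -/
def Interp.le (I J : Interp) : Prop := ∀ P, I.val P ⊆ J.val P

/-- Satisfaction `I, P ⊨ G`. -/
def sat (I : Interp) : Program → Gf → Prop
  | P, Gf.atom a => a ∈ I.val P
  | P, Gf.dimp d g => sat I (insert d P) g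
  | P, Gf.and g₁ g₂ => sat I P g₁ ∧ sat I P g₂
  | P, Gf.or g₁ g₂ => sat I P g₁ ∨ sat I P g₂

theorem InClos.mono' {P Q : Program} (h : P ⊆ Q) : ∀ {d}, InClos P d → InClos Q d := by
  intro d hd
  induction hd with
  | mem hm => exact InClos.mem (h hm)
  | andl _ ih => exact InClos.andl ih
  | andr _ ih => exact InClos.andr ih

theorem sat_mono (I : Interp) : ∀ (g : Gf) {P Q : Program}, P ⊆ Q → sat I P g → sat I Q g
  | Gf.atom _, _, _, h, hs => I.mono h hs
  | Gf.dimp d g, _, _, h, hs => sat_mono I g (Finset.insert_subset_insert d h) hs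
  | Gf.and g₁ g₂, _, _, h, hs => ⟨sat_mono I g₁ h hs.1, sat_mono I g₂ h hs.2⟩
  | Gf.or g₁ g₂, _, _, h, hs =>
      hs.elim (fun x => Or.inl (sat_mono I g₁ h x)) (fun x => Or.inr (sat_mono I g₂ h x))

/-- The raw unfolding operator. -/
def Traw (I : Interp) (P : Program) : Set Atm :=
  {a | InClos P (Df.atom a)} ∪
  {a | ∃ g, InClos P (Df.imp g a) ∧ sat I P g} ∪
  {a | sat I P (Gf.atom Atm.bot)}

/-- `T` maps interpretations to interpretations. -/
def T (I : Interp) : Interp := by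
  refine ⟨Traw I, ?_⟩
  intro P Q h a ha
  simp only [Traw, Set.mem_union, Set.mem_setOf_eq] at ha ⊢
  rcases ha with (h1 | ⟨g, hg, hs⟩) | h3
  · exact Or.inl (Or.inl (InClos.mono' h h1))
  · exact Or.inl (Or.inr ⟨g, InClos.mono' h hg, sat_mono I _ h hs⟩)
  · exact Or.inr (sat_mono I _ h h3)

/-- The bottom interpretation. -/
def Ibot : Interp := ⟨fun _ => ∅, fun _ => Set.Subset.refl _⟩

/-- Iterates of `T` from the bottom interpretation. -/
def Tn : ℕ → Interp
  | 0 => Ibot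
  | n + 1 => T (Tn n)

/-- `T^ω I_⊥`, the least fixed point of `T`. -/
def Tomega : Interp :=
  ⟨fun P => ⋃ n, (Tn n).val P, fun h => Set.iUnion_mono fun n => (Tn n).mono h⟩

/-- The pointwise supremum of a family of interpretations. -/
def chainSup (I : ℕ → Interp) : Interp :=
  ⟨fun P => ⋃ n, (I n).val P, fun h => Set.iUnion_mono fun n => (I n).mono h⟩

/-- Operational semantics for hHLP. -/
inductive Exec : Program → Gf → Prop
  | inn {P a} : InClos P (Df.atom a) → Exec P (Gf.atom a)
  | clause {P g a} : InClos P (Df.imp g a) → Exec P g → Exec P (Gf.atom a)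
  | efq {P g} : Exec P (Gf.atom Atm.bot) → Exec P g
  | orl {P g₁ g₂} : Exec P g₁ → Exec P (Gf.or g₁ g₂)
  | orr {P g₁ g₂} : Exec P g₂ → Exec P (Gf.or g₁ g₂)
  | and {P g₁ g₂} : Exec P g₁ → Exec P g₂ → Exec P (Gf.and g₁ g₂)
  | load {P d g} : Exec (insert d P) g → Exec P (Gf.dimp d g)

/-! ## Formulae of IPL and natural deduction NJ -/

inductive Fml : Type
  | atom : ℕ → Fml
  | bot : Fml
  | and : Fml → Fml → Fml
  | or : Fml → Fml → Fml
  | imp : Fml → Fml → Fml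

/-- Gentzen's natural deduction system NJ for IPL. -/
inductive NJ : Set Fml → Fml → Prop
  | ax {Γ φ} : φ ∈ Γ → NJ Γ φ
  | andI {Γ φ ψ} : NJ Γ φ → NJ Γ ψ → NJ Γ (Fml.and φ ψ)
  | andE1 {Γ φ ψ} : NJ Γ (Fml.and φ ψ) → NJ Γ φ
  | andE2 {Γ φ ψ} : NJ Γ (Fml.and φ ψ) → NJ Γ ψ
  | orI1 {Γ φ ψ} : NJ Γ φ → NJ Γ (Fml.or φ ψ)
  | orI2 {Γ φ ψ} : NJ Γ ψ → NJ Γ (Fml.or φ ψ)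
  | orE {Γ φ ψ χ} : NJ Γ (Fml.or φ ψ) → NJ (insert φ Γ) χ → NJ (insert ψ Γ) χ → NJ Γ χ
  | impI {Γ φ ψ} : NJ (insert φ Γ) ψ → NJ Γ (Fml.imp φ ψ)
  | impE {Γ φ ψ} : NJ Γ (Fml.imp φ ψ) → NJ Γ φ → NJ Γ ψ
  | botE {Γ φ} : NJ Γ Fml.bot → NJ Γ φ

def Atm.toFml : Atm → Fml
  | Atm.bot => Fml.bot
  | Atm.at_ n => Fml.atom n

mutual
  def Df.toFml : Df → Fml
    | Df.atom a => a.toFml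
    | Df.imp g a => Fml.imp g.toFml a.toFml
    | Df.and d₁ d₂ => Fml.and d₁.toFml d₂.toFml
  def Gf.toFml : Gf → Fml
    | Gf.atom a => a.toFml
    | Gf.dimp d g => Fml.imp d.toFml g.toFml
    | Gf.and g₁ g₂ => Fml.and g₁.toFml g₂.toFml
    | Gf.or g₁ g₂ => Fml.or g₁.toFml g₂.toFml
end

/-! ## Base-extension semantics -/

/-- A (properly second-level) atomic rule: premisses are pairs of a finite set of
dischargeable atoms and an atomic conclusion; the conclusion is an atom. -/
structure ARule where
  prems : List (Finset ℕ × ℕ)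
  concl : ℕ

/-- Derivability of an atom from a set of atoms in an atomic system. -/
inductive Deriv (B : Set ARule) : Set ℕ → ℕ → Prop
  | hyp {S p} : p ∈ S → Deriv B S p
  | app {S} {r : ARule} : r ∈ B →
      (∀ pr ∈ r.prems, Deriv B (S ∪ ↑pr.1) pr.2) → Deriv B S r.concl

/-- Sandqvist's support relation `⊩_B φ` (over the basis of all second-level
atomic systems). -/
def Supp : Set ARule → Fml → Prop
  | B, Fml.atom n => Deriv B ∅ n
  | B, Fml.bot => ∀ n : ℕ, Deriv B ∅ n
  | B, Fml.and φ ψ => Supp B φ ∧ Supp B ψ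
  | B, Fml.imp φ ψ => ∀ C, B ⊆ C → Supp C φ → Supp C ψ
  | B, Fml.or φ ψ => ∀ C, B ⊆ C → ∀ p : ℕ,
      (∀ D, C ⊆ D → Supp D φ → Deriv D ∅ p) →
      (∀ D, C ⊆ D → Supp D ψ → Deriv D ∅ p) → Deriv C ∅ p

/-- Support with open assumptions: `Γ ⊩_B φ`. -/
def SuppCtx (B : Set ARule) (Γ : Set Fml) (φ : Fml) : Prop :=
  ∀ C, B ⊆ C → (∀ ψ ∈ Γ, Supp C ψ) → Supp C φ

/-! ## The bespoke base `N` -/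

/-- Atoms occurring in a formula. -/
def atomsIn : Fml → Set ℕ
  | Fml.atom n => {n}
  | Fml.bot => ∅
  | Fml.and φ ψ => atomsIn φ ∪ atomsIn ψ
  | Fml.or φ ψ => atomsIn φ ∪ atomsIn ψ
  | Fml.imp φ ψ => atomsIn φ ∪ atomsIn ψ

/-- A flattening map `♭` is good for a set `S` of formulae if it is injective,
the identity on atoms, and assigns fresh atoms to non-atomic formulae of `S`. -/
def FlatGood (fl : Fml → ℕ) (S : Set Fml) : Prop :=
  Function.Injective fl ∧ (∀ n, fl (Fml.atom n) = n) ∧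
  (∀ φ ∈ S, (∀ n, φ ≠ Fml.atom n) → ∀ ψ ∈ S, fl φ ∉ atomsIn ψ)

/-- `S` is closed under subformulae. -/
def SubClosed (S : Set Fml) : Prop :=
  (∀ φ ψ, Fml.and φ ψ ∈ S → φ ∈ S ∧ ψ ∈ S) ∧
  (∀ φ ψ, Fml.or φ ψ ∈ S → φ ∈ S ∧ ψ ∈ S) ∧
  (∀ φ ψ, Fml.imp φ ψ ∈ S → φ ∈ S ∧ ψ ∈ S)

/-- The rules of the bespoke base `N` emulating NJ via flattened atoms, for the
formulae occurring in `S`. -/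
inductive NRule (fl : Fml → ℕ) (S : Set Fml) : ARule → Prop
  | andI {φ ψ} : Fml.and φ ψ ∈ S →
      NRule fl S ⟨[(∅, fl φ), (∅, fl ψ)], fl (Fml.and φ ψ)⟩
  | andE1 {φ ψ} : Fml.and φ ψ ∈ S →
      NRule fl S ⟨[(∅, fl (Fml.and φ ψ))], fl φ⟩
  | andE2 {φ ψ} : Fml.and φ ψ ∈ S →
      NRule fl S ⟨[(∅, fl (Fml.and φ ψ))], fl ψ⟩
  | orI1 {φ ψ} : Fml.or φ ψ ∈ S →
      NRule fl S ⟨[(∅, fl φ)], fl (Fml.or φ ψ)⟩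
  | orI2 {φ ψ} : Fml.or φ ψ ∈ S →
      NRule fl S ⟨[(∅, fl ψ)], fl (Fml.or φ ψ)⟩
  | orE {φ ψ χ} : Fml.or φ ψ ∈ S → χ ∈ S →
      NRule fl S ⟨[(∅, fl (Fml.or φ ψ)), ({fl φ}, fl χ), ({fl ψ}, fl χ)], fl χ⟩
  | impI {φ ψ} : Fml.imp φ ψ ∈ S →
      NRule fl S ⟨[({fl φ}, fl ψ)], fl (Fml.imp φ ψ)⟩
  | impE {φ ψ} : Fml.imp φ ψ ∈ S →
      NRule fl S ⟨[(∅, fl φ), (∅, fl (Fml.imp φ ψ))], fl ψ⟩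
  | botE {φ} : φ ∈ S →
      NRule fl S ⟨[(∅, fl Fml.bot)], fl φ⟩

/-! ## Encoding atomic systems as formulae / programs -/

def conjAtoms : ℕ → List ℕ → Fml
  | a, [] => Fml.atom a
  | a, b :: l => Fml.and (Fml.atom a) (conjAtoms b l)

noncomputable def encPrem (pr : Finset ℕ × ℕ) : Fml :=
  match pr.1.toList with
  | [] => Fml.atom pr.2
  | a :: l => Fml.imp (conjAtoms a l) (Fml.atom pr.2)

def conjFrm : Fml → List Fml → Fml
  | f, [] => f
  | f, g :: l => Fml.and f (conjFrm g l)

/-- Encoding `⌊-⌋` of a second-level atomic rule as a formula of IPL. -/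
noncomputable def encRule (r : ARule) : Fml :=
  match r.prems with
  | [] => Fml.atom r.concl
  | q :: qs => Fml.imp (conjFrm (encPrem q) (qs.map encPrem)) (Fml.atom r.concl)

def conjD : Df → List Df → Df
  | d, [] => d
  | d, e :: l => Df.and d (conjD e l)

def conjG : Gf → List Gf → Gf
  | g, [] => g
  | g, h :: l => Gf.and g (conjG h l)

noncomputable def encPremG (pr : Finset ℕ × ℕ) : Gf :=
  match pr.1.toList with
  | [] => Gf.atom (Atm.at_ pr.2)
  | a :: l =>
      Gf.dimp (conjD (Df.atom (Atm.at_ a)) (l.map fun n => Df.atom (Atm.at_ n)))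
        (Gf.atom (Atm.at_ pr.2))

/-- Encoding of a second-level atomic rule as a definite formula. -/
noncomputable def encRuleD (r : ARule) : Df :=
  match r.prems with
  | [] => Df.atom (Atm.at_ r.concl)
  | q :: qs => Df.imp (conjG (encPremG q) (qs.map encPremG)) (Atm.at_ r.concl)

/-! ## Auxiliary material for Statement 16 -/

theorem exec_mono : ∀ {P : Program} {g}, Exec P g → ∀ {Q : Program}, P ⊆ Q → Exec Q g := by
  intro P g h
  induction h with
  | inn h => intro Q hs; exact Exec.inn (InClos.mono' hs h)
  | clause h1 _ ih => intro Q hs; exact Exec.clause (InClos.mono' hs h1) (ih hs)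
  | efq _ ih => intro Q hs; exact Exec.efq (ih hs)
  | orl _ ih => intro Q hs; exact Exec.orl (ih hs)
  | orr _ ih => intro Q hs; exact Exec.orr (ih hs)
  | and _ _ ih1 ih2 => intro Q hs; exact Exec.and (ih1 hs) (ih2 hs)
  | load _ ih => intro Q hs; exact Exec.load (ih (Finset.insert_subset_insert _ hs))

theorem exec_dimp {P : Program} {d g} (h : Exec P (Gf.dimp d g)) : Exec (insert d P) g := by
  cases h with
  | efq h' => exact Exec.efq (exec_mono h' (Finset.subset_insert _ _))
  | load h' => exact h'

theorem exec_or {P : Program} {g₁ g₂} (h : Exec P (Gf.or g₁ g₂)) : Exec P g₁ ∨ Exec P g₂ := by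
  cases h with
  | efq h' => exact Or.inl (Exec.efq h')
  | orl h' => exact Or.inl h'
  | orr h' => exact Or.inr h'

/-- Accessibility of a three-world Kripke frame: world `0` sees everything. -/
def Kle (w w' : Fin 3) : Prop := w = w' ∨ w = 0

theorem Kle.refl (w : Fin 3) : Kle w w := Or.inl rfl

theorem Kle.trans {w w' w'' : Fin 3} (h1 : Kle w w') (h2 : Kle w' w'') : Kle w w'' := by
  rcases h1 with rfl | rfl
  · exact h2
  · exact Or.inr rfl

/-- Kripke forcing. -/
def force (v : ℕ → Fin 3 → Prop) : Fin 3 → Fml → Prop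
  | w, Fml.atom n => v n w
  | _, Fml.bot => False
  | w, Fml.and φ ψ => force v w φ ∧ force v w ψ
  | w, Fml.or φ ψ => force v w φ ∨ force v w ψ
  | w, Fml.imp φ ψ => ∀ w', Kle w w' → force v w' φ → force v w' ψ

theorem force_mono (v : ℕ → Fin 3 → Prop)
    (hv : ∀ n w w', Kle w w' → v n w → v n w') :
    ∀ (φ : Fml) {w w'}, Kle w w' → force v w φ → force v w' φ
  | Fml.atom n, _, _, h, hf => hv n _ _ h hf
  | Fml.bot, _, _, _, hf => hf.elim
  | Fml.and φ ψ, _, _, h, hf =>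
      ⟨force_mono v hv φ h hf.1, force_mono v hv ψ h hf.2⟩
  | Fml.or φ ψ, _, _, h, hf =>
      hf.elim (fun x => Or.inl (force_mono v hv φ h x))
        (fun x => Or.inr (force_mono v hv ψ h x))
  | Fml.imp _ _, _, _, h, hf => fun w'' h' hφ => hf w'' (h.trans h') hφ

theorem nj_sound (v : ℕ → Fin 3 → Prop)
    (hv : ∀ n w w', Kle w w' → v n w → v n w')
    {Γ : Set Fml} {φ : Fml} (h : NJ Γ φ) :
    ∀ w, (∀ ψ ∈ Γ, force v w ψ) → force v w φ := by
  induction h with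
  | ax hm => exact fun w hctx => hctx _ hm
  | andI _ _ ih1 ih2 => exact fun w hctx => ⟨ih1 w hctx, ih2 w hctx⟩
  | andE1 _ ih => exact fun w hctx => (ih w hctx).1
  | andE2 _ ih => exact fun w hctx => (ih w hctx).2
  | orI1 _ ih => exact fun w hctx => Or.inl (ih w hctx)
  | orI2 _ ih => exact fun w hctx => Or.inr (ih w hctx)
  | orE _ _ _ ih1 ih2 ih3 =>
      intro w hctx
      rcases ih1 w hctx with h | h
      · exact ih2 w (fun ψ hm => by
          rcases hm with rfl | hm
          · exact h
          · exact hctx _ hm)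
      · exact ih3 w (fun ψ hm => by
          rcases hm with rfl | hm
          · exact h
          · exact hctx _ hm)
  | impI _ ih =>
      intro w hctx w' hle hφ
      exact ih w' (fun ψ hm => by
        rcases hm with rfl | hm
        · exact hφ
        · exact force_mono v hv ψ hle (hctx _ hm))
  | impE _ _ ih1 ih2 =>
      exact fun w hctx => ih1 w hctx w (Kle.refl w) (ih2 w hctx)
  | botE _ ih => exact fun w hctx => (ih w hctx).elim

/-- failure of the naive base-as-context equivalence: there is
no support relation `R` over bases-as-programs satisfying both
(i) `Γ ⊩ φ` iff `Γ ⊢ φ` in IPL (where `Γ ⊩ φ` means `Γ ⊩_B φ` for all bases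
`B`, with `Γ ⊩_B φ` the usual base-extension reading), and
(ii) `⊩_B φ` iff `B ⊢ φ` in the operational semantics, for all `B`, `φ`. -/
theorem no_naive_base_as_context (a b c : ℕ)
    (hab : a ≠ b) (hac : a ≠ c) (hbc : b ≠ c)
    (R : Program → Gf → Prop)
    (hi : ∀ (Γ : Set Gf) (φ : Gf),
      (∀ B C : Program, B ⊆ C → (∀ ψ ∈ Γ, R C ψ) → R C φ) ↔
        NJ (Gf.toFml '' Γ) φ.toFml)
    (hii : ∀ (B : Program) (φ : Gf), R B φ ↔ Exec B φ) :
    False := by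
  classical
  set g0 : Gf := Gf.dimp (Df.atom (Atm.at_ a))
      (Gf.or (Gf.atom (Atm.at_ b)) (Gf.atom (Atm.at_ c))) with hg0
  set φ : Gf := Gf.or (Gf.dimp (Df.atom (Atm.at_ a)) (Gf.atom (Atm.at_ b)))
      (Gf.dimp (Df.atom (Atm.at_ a)) (Gf.atom (Atm.at_ c))) with hφ
  have hL : ∀ B C : Program, B ⊆ C → (∀ ψ ∈ ({g0} : Set Gf), R C ψ) → R C φ := by
    intro B C _ hctx
    have h0 : Exec C g0 := (hii C g0).mp (hctx g0 rfl)
    rcases exec_or (exec_dimp h0) with h | h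
    · exact (hii C φ).mpr (Exec.orl (Exec.load h))
    · exact (hii C φ).mpr (Exec.orr (Exec.load h))
  have hNJ := (hi {g0} φ).mp hL
  rw [Set.image_singleton] at hNJ
  have hg0f : g0.toFml = Fml.imp (Fml.atom a) (Fml.or (Fml.atom b) (Fml.atom c)) := by
    simp [hg0, Gf.toFml, Df.toFml, Atm.toFml]
  have hφf : φ.toFml = Fml.or (Fml.imp (Fml.atom a) (Fml.atom b))
      (Fml.imp (Fml.atom a) (Fml.atom c)) := by
    simp [hφ, Gf.toFml, Df.toFml, Atm.toFml]
  rw [hg0f, hφf] at hNJ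
  -- Kripke countermodel
  set v : ℕ → Fin 3 → Prop :=
    fun n w => (n = a ∧ w ≠ 0) ∨ (n = b ∧ w = 1) ∨ (n = c ∧ w = 2) with hvdef
  have hv : ∀ n w w', Kle w w' → v n w → v n w' := by
    intro n w w' hle hn
    rcases hle with rfl | rfl
    · exact hn
    · rcases hn with ⟨_, h⟩ | ⟨_, h⟩ | ⟨_, h⟩ <;> simp at h
  have hctx0 : ∀ ψ ∈ ({Fml.imp (Fml.atom a) (Fml.or (Fml.atom b) (Fml.atom c))} : Set Fml),
      force v 0 ψ := by
    intro ψ hm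
    rcases hm with rfl
    intro w' _ hva
    have hw' : w' = 1 ∨ w' = 2 := by
      rcases hva with ⟨_, h⟩ | ⟨hb, h⟩ | ⟨hc, h⟩
      · omega
      · exact absurd hb hab
      · exact absurd hc hac
    rcases hw' with rfl | rfl
    · exact Or.inl (Or.inr (Or.inl ⟨rfl, rfl⟩))
    · exact Or.inr (Or.inr (Or.inr ⟨rfl, rfl⟩))
  have hforce := nj_sound v hv hNJ 0 hctx0
  rcases hforce with h | h
  · have := h 2 (Or.inr rfl) (Or.inl ⟨rfl, by decide⟩)
    rcases this with ⟨hb, _⟩ | ⟨_, h2⟩ | ⟨hbc', _⟩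
    · exact hab hb.symm
    · simp at h2
    · exact hbc hbc'
  · have := h 1 (Or.inr rfl) (Or.inl ⟨rfl, by decide⟩)
    rcases this with ⟨hc, _⟩ | ⟨hcb, h2⟩ | ⟨_, h2⟩
    · exact hac hc.symm
    · exact hbc hcb.symm
    · simp at h2
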